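/- arXiv:1904.10516 — 7 statements merged into one kernel-verified Lean document; each statement's English description precedes it below -/
import Mathlib

section
/- Let $b$ be a memory function on a set of ordinals $X$, and let $B \subseteq X$ be memory closed. Then there exists a set of ordinals $X^*$ and an acceptable rearrangement $\sigma : X \to X^*$ of $(X,b)$ such that $\sigma$ is the identity on $B$ and $\sigma[B]$ is an initial segment of $X^*$ (that is, every element of $\sigma[X \setminus B]$ is strictly greater than every element of $\sigma[B]$). -/
open Ordinal

/-- any memory closed subset `B` of `X` can be made an initial
segment by an acceptable rearrangement which is the identity on `B`. -/
theorem stmt_3 (X B : Set Ordinal) (hXbd : BddAbove X) (b : Ordinal → Set Ordinal)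
    (hb1 : ∀ ξ ∈ X, b ξ ⊆ X ∩ Set.Iio ξ)
    (hb2 : ∀ ξ ∈ X, ∀ ζ ∈ b ξ, b ζ ⊆ b ξ)
    (hBX : B ⊆ X) (hBclosed : ∀ ξ ∈ B, b ξ ⊆ B) :
    ∃ (Xstar : Set Ordinal) (σ : Ordinal → Ordinal),
      Set.BijOn σ X Xstar ∧
      (∀ ξ ∈ X, ∀ ζ ∈ b ξ, σ ζ < σ ξ) ∧
      (∀ ξ ∈ B, σ ξ = ξ) ∧
      (∀ a ∈ σ '' B, ∀ c ∈ σ '' (X \ B), a < c) := by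
  classical
  set u : Ordinal := sSup X + 1 with hu
  have hlt : ∀ ξ ∈ X, ξ < u := fun ξ hξ =>
    lt_of_le_of_lt (le_csSup hXbd hξ) (lt_add_one _)
  set σ : Ordinal → Ordinal := fun ξ => if ξ ∈ B then ξ else u + ξ with hσ
  have hσB : ∀ ξ ∈ B, σ ξ = ξ := fun ξ hξ => if_pos hξ
  have hσnB : ∀ ξ ∉ B, σ ξ = u + ξ := fun ξ hξ => if_neg hξ
  have hBlt : ∀ ξ ∈ B, ∀ ζ, ζ ∉ B → σ ξ < σ ζ := by
    intro ξ hξ ζ hζ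
    rw [hσB ξ hξ, hσnB ζ hζ]
    exact lt_of_lt_of_le (hlt ξ (hBX hξ)) le_self_add
  have hinj : Set.InjOn σ X := by
    intro x hx y hy hxy
    by_cases hxB : x ∈ B <;> by_cases hyB : y ∈ B
    · rwa [hσB x hxB, hσB y hyB] at hxy
    · exact absurd hxy (ne_of_lt (hBlt x hxB y hyB))
    · exact absurd hxy.symm (ne_of_lt (hBlt y hyB x hxB))
    · rw [hσnB x hxB, hσnB y hyB] at hxy
      exact add_left_cancel_iff.mp hxy
  refine ⟨σ '' X, σ, hinj.bijOn_image, ?_, hσB, ?_⟩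
  · intro ξ hξ ζ hζ
    have hζX : ζ ∈ X := (hb1 ξ hξ hζ).1
    have hζξ : ζ < ξ := (hb1 ξ hξ hζ).2
    by_cases hξB : ξ ∈ B
    · have hζB : ζ ∈ B := hBclosed ξ hξB hζ
      rw [hσB ξ hξB, hσB ζ hζB]; exact hζξ
    · by_cases hζB : ζ ∈ B
      · exact hBlt ζ hζB ξ hξB
      · rw [hσnB ξ hξB, hσnB ζ hζB]
        exact (add_lt_add_iff_left u).mpr hζξ
  · rintro a ⟨ξ, hξ, rfl⟩ c ⟨ζ, hζ, rfl⟩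
    exact hBlt ξ hξ ζ hζ.2
end

section
/- Suppose $\langle x, \pi_x \rangle$ and $\langle y, \pi_y \rangle$ are two coherent shadow bases with indices $\alpha \leq \beta$ respectively, in the following abstract sense: $\pi_x$ is an order isomorphism from an ordinal $\gamma_x$ onto a set of ordinals $x$, $\pi_y$ is an order isomorphism from an ordinal $\gamma_y$ onto a set of ordinals $y$, and for every $\zeta \in x \cap y$, setting $\mu_x = \pi_x^{-1}(\zeta)$ and $\mu_y = \pi_y^{-1}(\zeta)$, we have $\pi_x[\mu_x] \subseteq \pi_y[\mu_y]$. Then $\pi_x^{-1}[x \cap y]$ is an ordinal $\leq \gamma_x$; in other words, $x \cap y$ is an initial segment of $x$ under the enumeration $\pi_x$. -/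
open Ordinal

/-- for coherent shadow bases (the one with the smaller index
enumerated by `πx`), the intersection `x ∩ y` is an initial segment of `x`
under the enumeration `πx`. -/
theorem stmt_4 (γx γy : Ordinal) (x y : Set Ordinal) (πx πy : Ordinal → Ordinal)
    (hbx : Set.BijOn πx (Set.Iio γx) x) (hby : Set.BijOn πy (Set.Iio γy) y)
    (hmx : StrictMonoOn πx (Set.Iio γx)) (hmy : StrictMonoOn πy (Set.Iio γy))
    (hcoh : ∀ μ ∈ Set.Iio γx, ∀ ν ∈ Set.Iio γy, πx μ = πy ν →
      πx '' Set.Iio μ ⊆ πy '' Set.Iio ν) :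
    ∃ μ ≤ γx, {ν | ν < γx ∧ πx ν ∈ y} = Set.Iio μ := by
  set S : Set Ordinal := {ν | ν < γx ∧ πx ν ∈ y} with hS
  -- S is downward closed
  have hdc : ∀ ν ∈ S, ∀ ν' < ν, ν' ∈ S := by
    intro ν hν ν' hν'
    obtain ⟨hνγ, hνy⟩ := hν
    obtain ⟨μy, hμy, hπy⟩ := hby.surjOn hνy
    have hsub := hcoh ν hνγ μy hμy hπy.symm
    have : πx ν' ∈ πy '' Set.Iio μy := hsub ⟨ν', hν', rfl⟩
    obtain ⟨w, hw, hweq⟩ := this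
    refine ⟨lt_trans hν' hνγ, ?_⟩
    rw [← hweq]
    exact hby.mapsTo (Set.mem_Iio.mpr (lt_trans hw hμy))
  -- complement nonempty
  have hγx : γx ∉ S := fun h => lt_irrefl _ h.1
  set μ := sInf Sᶜ with hμ
  have hμmem : μ ∉ S := csInf_mem (⟨γx, hγx⟩ : Sᶜ.Nonempty)
  refine ⟨μ, csInf_le' hγx, ?_⟩
  ext ν
  constructor
  · intro hν
    by_contra h
    simp only [Set.mem_Iio, not_lt] at h
    rcases eq_or_lt_of_le h with h | h
    · exact hμmem (h ▸ hν)
    · exact hμmem (hdc ν hν μ h)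
  · intro hν
    by_contra h
    exact absurd (csInf_le' (Set.mem_compl h)) (not_le.mpr hν)
end

section
/- Let $\pi_x : \gamma_x \to x$ and $\pi_y : \gamma_y \to y$ be order isomorphisms from ordinals onto sets of ordinals, and suppose that for every $\zeta \in x \cap y$, $\pi_x[\pi_x^{-1}(\zeta)] \subseteq \pi_y[\pi_y^{-1}(\zeta)]$ and $\pi_y[\pi_y^{-1}(\zeta)] \subseteq \pi_x[\pi_x^{-1}(\zeta)]$ (symmetric coherence, as when both shadow bases have the same index). Then for every $\zeta \in x \cap y$, setting $\zeta_0 = \pi_x^{-1}(\zeta)$, we have $\zeta_0 = \pi_y^{-1}(\zeta)$, and in fact $\pi_x \restriction (\zeta_0 + 1) = \pi_y \restriction (\zeta_0 + 1)$. -/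
open Ordinal

/-- symmetrically coherent shadow bases (same index) agree on the
closed initial segment determined by any common point. -/
theorem stmt_6 (γx γy : Ordinal) (x y : Set Ordinal) (πx πy : Ordinal → Ordinal)
    (hbx : Set.BijOn πx (Set.Iio γx) x) (hby : Set.BijOn πy (Set.Iio γy) y)
    (hmx : StrictMonoOn πx (Set.Iio γx)) (hmy : StrictMonoOn πy (Set.Iio γy))
    (hcoh : ∀ μ ∈ Set.Iio γx, ∀ ν ∈ Set.Iio γy, πx μ = πy ν →
      πx '' Set.Iio μ ⊆ πy '' Set.Iio ν ∧ πy '' Set.Iio ν ⊆ πx '' Set.Iio μ) :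
    ∀ ζ ∈ x ∩ y, ∀ ζ₀ ∈ Set.Iio γx, ∀ ν ∈ Set.Iio γy,
      πx ζ₀ = ζ → πy ν = ζ → ζ₀ = ν ∧ ∀ ξ ≤ ζ₀, πx ξ = πy ξ := by
  have key : ∀ μ, μ < γx → ∀ ν, ν < γy → πx μ = πy ν →
      μ = ν ∧ ∀ ξ ≤ μ, πx ξ = πy ξ := by
    intro μ
    induction μ using Ordinal.induction with
    | h μ IH =>
      intro hμ ν hν heq
      obtain ⟨h1, h2⟩ := hcoh μ hμ ν hν heq
      have hle1 : μ ≤ ν := by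
        by_contra h
        push_neg at h
        obtain ⟨ν', hν', hpe⟩ := h1 ⟨ν, h, rfl⟩
        have := (IH ν h (h.trans hμ) ν' (hν'.trans hν) hpe.symm).1
        exact absurd hν' (by rw [← this]; exact lt_irrefl ν)
      have hle2 : ν ≤ μ := by
        by_contra h
        push_neg at h
        obtain ⟨ξ, hξ, hpe⟩ := h2 ⟨μ, h, rfl⟩
        have := (IH ξ hξ (hξ.trans hμ) μ (h.trans hν) hpe).1
        exact absurd hξ (by rw [this]; exact lt_irrefl μ)
      have hmn : μ = ν := le_antisymm hle1 hle2
      refine ⟨hmn, fun ξ hξ => ?_⟩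
      rcases lt_or_eq_of_le hξ with hlt | rfl
      · obtain ⟨ν', hν', hpe⟩ := h1 ⟨ξ, hlt, rfl⟩
        have h' := IH ξ hlt (hlt.trans hμ) ν' (hν'.trans hν) hpe.symm
        have := h'.2 ξ le_rfl
        rw [this]
      · rw [heq, hmn]
  intro ζ _ ζ₀ hζ₀ ν hν hx hy
  exact key ζ₀ hζ₀ ν hν (by rw [hx, hy])
end

section
/- Let $\pi_x : \gamma_x \to x$ and $\pi_y : \gamma_y \to y$ be order isomorphisms from ordinals onto sets of ordinals satisfying symmetric coherence: for every $\zeta \in x \cap y$, $\pi_x[\pi_x^{-1}(\zeta)] = \pi_y[\pi_y^{-1}(\zeta)]$. Then $\pi_x^{-1}[x \cap y] = \pi_y^{-1}[x \cap y]$ is an ordinal $\mu \leq \min(\gamma_x, \gamma_y)$, and if $x \neq y$ then $\mu < \max(\gamma_x, \gamma_y)$. -/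
open Ordinal

/-- for symmetrically coherent shadow bases, `x ∩ y` is a common
initial segment `μ ≤ min(γx,γy)` of both enumerations, and if `x ≠ y` then
`μ < max(γx,γy)`. -/
theorem stmt_7 (γx γy : Ordinal) (x y : Set Ordinal) (πx πy : Ordinal → Ordinal)
    (hbx : Set.BijOn πx (Set.Iio γx) x) (hby : Set.BijOn πy (Set.Iio γy) y)
    (hmx : StrictMonoOn πx (Set.Iio γx)) (hmy : StrictMonoOn πy (Set.Iio γy))
    (hcoh : ∀ μ ∈ Set.Iio γx, ∀ ν ∈ Set.Iio γy, πx μ = πy ν →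
      πx '' Set.Iio μ = πy '' Set.Iio ν) :
    ∃ μ, μ ≤ min γx γy ∧
      {ν | ν < γx ∧ πx ν ∈ y} = Set.Iio μ ∧
      {ν | ν < γy ∧ πy ν ∈ x} = Set.Iio μ ∧
      (x ≠ y → μ < max γx γy) := by
  -- key: matching indices agree
  have key : ∀ ν < γx, ∀ ν' < γy, πx ν = πy ν' → ν = ν' := by
    intro ν
    induction ν using Ordinal.induction with
    | h ν IH =>
      intro hν ν' hν' heq
      have hset := hcoh ν hν ν' hν' heq
      apply le_antisymm
      · by_contra h
        push_neg at h
        have hmem : πx ν' ∈ πy '' Set.Iio ν' := by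
          rw [← hset]; exact ⟨ν', h, rfl⟩
        obtain ⟨ζ', hζ', hζeq⟩ := hmem
        have := IH ν' h (h.trans hν) ζ' (hζ'.trans hν') hζeq.symm
        exact absurd (Set.mem_Iio.mp (this ▸ hζ')) (lt_irrefl _)
      · by_contra h
        push_neg at h
        have hmem : πy ν ∈ πx '' Set.Iio ν := by
          rw [hset]; exact ⟨ν, h, rfl⟩
        obtain ⟨ζ, hζ, hζeq⟩ := hmem
        have := IH ζ hζ (hζ.trans hν) ν (h.trans hν') hζeq
        exact absurd (Set.mem_Iio.mp (this ▸ hζ)) (lt_irrefl _)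
  set A : Set Ordinal := {ν | ν < γx ∧ πx ν ∈ y} with hA
  -- A equals the corresponding set for y
  have hAB : A = {ν | ν < γy ∧ πy ν ∈ x} := by
    ext ν
    constructor
    · rintro ⟨hν, hy⟩
      rw [← hby.image_eq] at hy
      obtain ⟨ν', hν', heq⟩ := hy
      have := key ν hν ν' hν' heq.symm
      subst this
      exact ⟨hν', heq ▸ hbx.mapsTo hν⟩
    · rintro ⟨hν, hx⟩
      rw [← hbx.image_eq] at hx
      obtain ⟨ν', hν', heq⟩ := hx
      have := key ν' hν' ν hν heq
      subst this
      exact ⟨hν', heq ▸ hby.mapsTo hν⟩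
  -- A is downward closed
  have hdc : ∀ ν ∈ A, ∀ ζ < ν, ζ ∈ A := by
    rintro ν ⟨hν, hy⟩ ζ hζ
    rw [← hby.image_eq] at hy
    obtain ⟨ν', hν', heq⟩ := hy
    have hkey := key ν hν ν' hν' heq.symm
    subst hkey
    have hset := hcoh ν hν ν hν' heq.symm
    have hmem : πx ζ ∈ πy '' Set.Iio ν := by
      rw [← hset]; exact ⟨ζ, hζ, rfl⟩
    obtain ⟨ζ', hζ', hζeq⟩ := hmem
    exact ⟨hζ.trans hν, hζeq ▸ hby.mapsTo ((Set.mem_Iio.mp hζ').trans hν')⟩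
  have hne : (Aᶜ : Set Ordinal).Nonempty := ⟨γx, fun h => absurd h.1 (lt_irrefl _)⟩
  set μ := sInf Aᶜ with hμdef
  have hμmem : μ ∈ Aᶜ := csInf_mem hne
  have hAIio : A = Set.Iio μ := by
    ext ν
    constructor
    · intro hν
      rcases lt_or_ge ν μ with hlt | hle
      · exact hlt
      · rcases eq_or_lt_of_le hle with heq | hlt
        · exact absurd (heq ▸ hν) hμmem
        · exact absurd (hdc ν hν μ hlt) hμmem
    · intro hν
      have hν' : ν < μ := hν
      by_contra h
      exact absurd (csInf_le' (show ν ∈ Aᶜ from h)) (not_le_of_gt hν')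
  have hμx : μ ≤ γx := by
    by_contra h
    push_neg at h
    have : γx ∈ A := by rw [hAIio]; exact h
    exact absurd this.1 (lt_irrefl _)
  have hμy : μ ≤ γy := by
    by_contra h
    push_neg at h
    have : γy ∈ A := by rw [hAIio]; exact h
    rw [hAB] at this
    exact absurd this.1 (lt_irrefl _)
  refine ⟨μ, le_min hμx hμy, hAIio, by rw [← hAB]; exact hAIio, ?_⟩
  intro hxy
  by_contra h
  push_neg at h
  have hxsub : x ⊆ y := by
    rw [← hbx.image_eq]
    rintro _ ⟨ν, hν, rfl⟩
    have hνA : ν ∈ A := by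
      rw [hAIio]
      exact lt_of_lt_of_le hν (le_trans (le_max_left _ _) h)
    exact hνA.2
  have hysub : y ⊆ x := by
    rw [← hby.image_eq]
    rintro _ ⟨ν, hν, rfl⟩
    have hνB : ν ∈ A := by
      rw [hAIio]
      exact lt_of_lt_of_le hν (le_trans (le_max_right _ _) h)
    rw [hAB] at hνB
    exact hνB.2
  exact hxy (subset_antisymm hxsub hysub)
end

section
/- Suppose $A$ is a set of ordinals which is countably closed in $\sup A$ (every limit point of $A$ below $\sup A$ of cofinality $\omega$ lies in $A$), and $\langle S_\alpha : \alpha \in A \rangle$ is a $\subseteq$-increasing family of sets indexed by $A$ such that $A \cap \alpha = S_\alpha$ for each $\alpha \in A$. If $Z$ is an $\omega$-closed cofinal subset of $\sup A$ (of uncountable cofinality) such that the family $\langle S_\alpha : \alpha \in Z \cap A \rangle$ extends to a $\subseteq$-increasing family $\langle T_\alpha : \alpha \in Z \rangle$ with $T_\alpha = S_\alpha$ for $\alpha \in Z \cap A$, then $A = \bigcup_{\alpha \in Z \cap A} S_\alpha = \bigcup_{\alpha \in Z} T_\alpha$ provided $\langle T_\alpha : \alpha \in Z\rangle$ is $\subseteq$-increasing.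 -/
open Ordinal Cardinal

/-- a set `A` countably closed in its supremum (of uncountable
cofinality), approximated by the increasing family `S α = A ∩ α` (`α ∈ A`), is
recovered as the union of the approximations along any `ω`-closed cofinal `Z`
over which the extended family `T` is `⊆`-increasing and agrees with `S`. -/
theorem stmt_9 (A Z : Set Ordinal) (S T : Ordinal → Set Ordinal)
    (hA : BddAbove A) (hnomax : A ⊆ Set.Iio (sSup A))
    (hcof : Cardinal.aleph0 < (sSup A).cof)
    (hAclosed : ∀ lam < sSup A, 0 < lam → sSup (A ∩ Set.Iio lam) = lam →
      lam.cof = Cardinal.aleph0 → lam ∈ A)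
    (hS : ∀ α ∈ A, S α = A ∩ Set.Iio α)
    (hSmono : ∀ α ∈ A, ∀ β ∈ A, α ≤ β → S α ⊆ S β)
    (hZsub : Z ⊆ Set.Iio (sSup A))
    (hZclosed : ∀ g : ℕ → Ordinal, (∀ n, g n ∈ Z) → StrictMono g →
      (⨆ n, g n) < sSup A → (⨆ n, g n) ∈ Z)
    (hZcof : ∀ α < sSup A, ∃ z ∈ Z, α ≤ z)
    (hT : ∀ α ∈ Z ∩ A, T α = S α)
    (hTmono : ∀ α ∈ Z, ∀ β ∈ Z, α ≤ β → T α ⊆ T β) :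
    A = ⋃ α ∈ Z ∩ A, S α ∧ A = ⋃ α ∈ Z, T α := by
  -- sSup A is a limit ordinal
  have hlim : Order.IsSuccLimit (sSup A) := Ordinal.aleph0_le_cof.1 hcof.le
  have hAne : A.Nonempty := by
    by_contra h
    rw [Set.not_nonempty_iff_eq_empty] at h
    simp [h, csSup_empty] at hcof
  -- a single joint step: above any β < sSup A find z ∈ Z then a ∈ A above it
  have step : ∀ β : Ordinal, ∃ p : Ordinal × Ordinal, β < sSup A →
      (p.1 ∈ Z ∧ p.2 ∈ A ∧ p.1 < p.2 ∧ p.2 < sSup A) ∧ β < p.1 := by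
    intro β
    by_cases hβ : β < sSup A
    · obtain ⟨z, hzZ, hzβ⟩ := hZcof (β + 1) (hlim.succ_lt hβ)
      have hz : z < sSup A := hZsub hzZ
      obtain ⟨a, haA, hza⟩ := exists_lt_of_lt_csSup hAne hz
      exact ⟨(z, a), fun _ => ⟨⟨hzZ, haA, hza, hnomax haA⟩,
        lt_of_lt_of_le (Order.lt_succ β) hzβ⟩⟩
    · exact ⟨(0, 0), fun h => absurd h hβ⟩
  choose F hF using step
  -- key claim: Z ∩ A is cofinal in sSup A
  have key : ∀ α < sSup A, ∃ z ∈ Z ∩ A, α < z := by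
    intro α hα
    set f : ℕ → Ordinal × Ordinal := fun n => Nat.rec (F α) (fun _ p => F p.2) n with hf
    have hf0 : f 0 = F α := rfl
    have hfs : ∀ n, f (n + 1) = F (f n).2 := fun n => rfl
    set u : ℕ → Ordinal := fun n => (f n).1
    set v : ℕ → Ordinal := fun n => (f n).2
    have inv : ∀ n, u n ∈ Z ∧ v n ∈ A ∧ u n < v n ∧ v n < sSup A := by
      intro n
      induction n with
      | zero => exact (hF α hα).1
      | succ k ih => exact (hF (v k) ih.2.2.2).1
    have hstep : ∀ n, v n < u (n + 1) := fun n => (hF (v n) (inv n).2.2.2).2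
    have humono : StrictMono u :=
      strictMono_nat_of_lt_succ fun n => (inv n).2.2.1.trans (hstep n)
    set lam : Ordinal := ⨆ n, u n with hlam
    have hulam : ∀ n, u n ≤ lam := Ordinal.le_iSup u
    have hvltlam : ∀ n, v n < lam := fun n => lt_of_lt_of_le (hstep n) (hulam (n + 1))
    have hultlam : ∀ n, u n < lam := fun n => lt_of_lt_of_le ((inv n).2.2.1.trans (hstep n)) (hulam (n+1))
    have hlamlt : lam < sSup A := by
      rw [hlam]
      have hcount : Cardinal.lift #ℕ < (sSup A).cof := by
        rw [Cardinal.mk_nat, Cardinal.lift_aleph0]; exact hcof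
      have hub : ∀ n, u n < sSup A := fun n => (inv n).2.2.1.trans (inv n).2.2.2
      exact Ordinal.iSup_lt_ord_lift hcount hub
    have hlamZ : lam ∈ Z := hZclosed u (fun n => (inv n).1) humono hlamlt
    have hlampos : 0 < lam := (zero_le (a := u 0)).trans_lt (hultlam 0)
    have hlamlimit : Order.IsSuccLimit lam := by
      refine Ordinal.isSuccLimit_iff.2 ⟨hlampos.ne', Order.isSuccPrelimit_of_succ_lt fun b hb => ?_⟩
      obtain ⟨n, hn⟩ := (Ordinal.lt_iSup_iff).1 hb
      exact lt_of_le_of_lt (Order.succ_le_of_lt hn) (hultlam n)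
    have hcoflam : lam.cof = Cardinal.aleph0 := by
      refine le_antisymm ?_ (Ordinal.aleph0_le_cof.2 hlamlimit)
      rw [hlam]
      have h2 : ∀ n, u n < ⨆ n, u n := fun n => hlam ▸ hultlam n
      have := Ordinal.cof_iSup_le_lift h2
      simpa [Cardinal.mk_nat, Cardinal.lift_aleph0] using this
    have hsupA : sSup (A ∩ Set.Iio lam) = lam := by
      have hbdd : BddAbove (A ∩ Set.Iio lam) := ⟨lam, fun x hx => hx.2.le⟩
      refine le_antisymm (csSup_le ⟨v 0, (inv 0).2.1, hvltlam 0⟩ fun b hb => hb.2.le) ?_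
      rw [hlam]
      refine Ordinal.iSup_le fun n => ?_
      exact le_trans (inv n).2.2.1.le (le_csSup hbdd ⟨(inv n).2.1, hvltlam n⟩)
    have hlamA : lam ∈ A := hAclosed lam hlamlt hlampos hsupA hcoflam
    exact ⟨lam, ⟨hlamZ, hlamA⟩, lt_of_lt_of_le (hF α hα).2 (hulam 0)⟩
  constructor
  · ext x
    simp only [Set.mem_iUnion, exists_prop]
    constructor
    · intro hx
      obtain ⟨z, hz, hxz⟩ := key x (hnomax hx)
      exact ⟨z, hz, by rw [hS z hz.2]; exact ⟨hx, hxz⟩⟩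
    · rintro ⟨z, hz, hxS⟩
      rw [hS z hz.2] at hxS
      exact hxS.1
  · ext x
    simp only [Set.mem_iUnion, exists_prop]
    constructor
    · intro hx
      obtain ⟨z, hz, hxz⟩ := key x (hnomax hx)
      exact ⟨z, hz.1, by rw [hT z hz, hS z hz.2]; exact ⟨hx, hxz⟩⟩
    · rintro ⟨α, hα, hxT⟩
      obtain ⟨z, hz, hαz⟩ := key α (hZsub hα)
      have : x ∈ T z := hTmono α hα z hz.1 hαz.le hxT
      rw [hT z hz, hS z hz.2] at this
      exact this.1
end

section
/- Under the Continuum Hypothesis, there exists an injective partial function $f : \mathbb{R} \to \mathbb{R}$ with uncountable domain such that $f$ has no uncountable monotonic subfunction (i.e., there is no uncountable $A \subseteq \mathrm{dom}(f)$ on which $f$ is monotone increasing or monotone decreasing). -/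
open Set Cardinal Filter Topology

/-- Two monotone (or any) functions agreeing on ℚ, with equal discontinuity graphs, are equal. -/
lemma stmt12_ext {g h : ℝ → ℝ}
    (hq : ∀ q : ℚ, g (q : ℝ) = h (q : ℝ))
    (hD : (fun x => (x, g x)) '' {x | ¬ContinuousAt g x}
        = (fun x => (x, h x)) '' {x | ¬ContinuousAt h x}) : g = h := by
  funext x
  by_cases hx : ContinuousAt g x
  · have hx' : ContinuousAt h x := by
      by_contra hc
      have hmem : (x, h x) ∈ (fun x => (x, h x)) '' {x | ¬ContinuousAt h x} := ⟨x, hc, rfl⟩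
      rw [← hD] at hmem
      obtain ⟨y, hy, hxy⟩ := hmem
      have hyx : y = x := congrArg Prod.fst hxy
      rw [hyx] at hy
      exact hy hx
    have hdense : Dense (Set.range ((↑) : ℚ → ℝ)) := Rat.denseRange_cast
    haveI : (𝓝[Set.range ((↑) : ℚ → ℝ)] x).NeBot :=
      mem_closure_iff_nhdsWithin_neBot.1 (hdense x)
    have t1 : Tendsto g (𝓝[Set.range ((↑) : ℚ → ℝ)] x) (𝓝 (g x)) := hx.continuousWithinAt
    have t2 : Tendsto h (𝓝[Set.range ((↑) : ℚ → ℝ)] x) (𝓝 (h x)) := hx'.continuousWithinAt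
    have heq : g =ᶠ[𝓝[Set.range ((↑) : ℚ → ℝ)] x] h := by
      filter_upwards [self_mem_nhdsWithin] with y hy
      obtain ⟨q, rfl⟩ := hy
      exact hq q
    exact tendsto_nhds_unique (t1.congr' heq) t2
  · have hmem : (x, g x) ∈ (fun x => (x, g x)) '' {x | ¬ContinuousAt g x} := ⟨x, hx, rfl⟩
    rw [hD] at hmem
    obtain ⟨y, _, hxy⟩ := hmem
    have hyx : y = x := congrArg Prod.fst hxy
    have := congrArg Prod.snd hxy
    simp only at this
    rw [← this, hyx]

lemma stmt12_card_mono : #{g : ℝ → ℝ // Monotone g} ≤ Cardinal.continuum := by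
  classical
  set Gr : (ℝ → ℝ) → Set (ℝ × ℝ) := fun g => (fun x => (x, g x)) '' {x | ¬ContinuousAt g x}
    with hGr
  have hcnt : ∀ g : {g : ℝ → ℝ // Monotone g}, (Gr g.1).Countable := by
    intro g
    exact (g.2.countable_not_continuousAt).image _
  let σ : {g : ℝ → ℝ // Monotone g} → Option (ℕ → ℝ × ℝ) := fun g =>
    if h : (Gr g.1).Nonempty then some (Classical.choose ((hcnt g).exists_eq_range h)) else none
  have hσ : ∀ g, ∀ F, σ g = some F → Gr g.1 = Set.range F := by
    intro g F hF
    simp only [σ] at hF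
    split_ifs at hF with h
    · rw [Option.some_inj] at hF
      rw [← hF]
      exact Classical.choose_spec ((hcnt g).exists_eq_range h)
  have hσn : ∀ g, σ g = none → Gr g.1 = ∅ := by
    intro g hF
    by_contra hne
    have h : (Gr g.1).Nonempty := Set.nonempty_iff_ne_empty.2 hne
    simp only [σ, dif_pos h] at hF
    exact Option.some_ne_none _ hF
  let Φ : {g : ℝ → ℝ // Monotone g} → (ℚ → ℝ) × Option (ℕ → ℝ × ℝ) :=
    fun g => (fun q => g.1 q, σ g)
  have hinj : Function.Injective Φ := by
    intro g h hgh
    obtain ⟨h1, h2⟩ := Prod.mk.injEq .. ▸ hgh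
    have hq : ∀ q : ℚ, g.1 (q : ℝ) = h.1 (q : ℝ) := fun q => congrFun h1 q
    have hD : Gr g.1 = Gr h.1 := by
      rcases hE : σ g with _ | F
      · rw [hσn g hE, hσn h (hE ▸ h2).symm]
      · rw [hσ g F hE, hσ h F (hE ▸ h2).symm]
    exact Subtype.ext (stmt12_ext hq hD)
  calc #{g : ℝ → ℝ // Monotone g} ≤ #((ℚ → ℝ) × Option (ℕ → ℝ × ℝ)) := mk_le_of_injective hinj
    _ ≤ Cardinal.continuum := by
        have h1 : #(ℝ × ℝ) = Cardinal.continuum := by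
          simp [mk_real, mul_eq_self aleph0_le_continuum]
        rw [mk_prod, mk_option, mk_arrow, mk_arrow, h1, mk_real, mk_denumerable, mk_denumerable]
        simp [continuum_power_aleph0, add_one_eq aleph0_le_continuum,
          mul_eq_self aleph0_le_continuum]

lemma stmt12_card_family : #{h : ℝ → ℝ | ∃ g : ℝ → ℝ,
    (Monotone g ∨ Antitone g) ∧ h = Real.tan ∘ g} ≤ Cardinal.continuum := by
  classical
  have cardA : #{g : ℝ → ℝ // Antitone g} ≤ Cardinal.continuum := by
    have hinj : Function.Injective (fun g : {g : ℝ → ℝ // Antitone g} =>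
        (⟨fun x => -(g.1 x), g.2.neg⟩ : {g : ℝ → ℝ // Monotone g})) := by
      intro a b hab
      exact Subtype.ext (funext fun x =>
        neg_injective (congrFun (congrArg Subtype.val hab) x))
    exact (mk_le_of_injective hinj).trans stmt12_card_mono
  have hsub : {h : ℝ → ℝ | ∃ g : ℝ → ℝ, (Monotone g ∨ Antitone g) ∧ h = Real.tan ∘ g}
      ⊆ (fun g : ℝ → ℝ => Real.tan ∘ g) '' ({g | Monotone g} ∪ {g | Antitone g}) := by
    rintro h ⟨g, hg, rfl⟩
    exact ⟨g, hg, rfl⟩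
  calc #{h : ℝ → ℝ | ∃ g : ℝ → ℝ, (Monotone g ∨ Antitone g) ∧ h = Real.tan ∘ g}
      ≤ #((fun g : ℝ → ℝ => Real.tan ∘ g) '' ({g | Monotone g} ∪ {g | Antitone g})) :=
        mk_le_mk_of_subset hsub
    _ ≤ #(({g : ℝ → ℝ | Monotone g} ∪ {g | Antitone g} : Set (ℝ → ℝ))) := mk_image_le
    _ ≤ #{g : ℝ → ℝ | Monotone g} + #{g : ℝ → ℝ | Antitone g} := mk_union_le _ _
    _ ≤ Cardinal.continuum + Cardinal.continuum := add_le_add stmt12_card_mono cardA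
    _ = Cardinal.continuum := add_eq_self aleph0_le_continuum

/-- under CH there is an injective partial real function with
uncountable domain and no uncountable monotonic subfunction. -/
theorem stmt_12 (hCH : Cardinal.continuum = Cardinal.aleph 1) :
    ∃ (s : Set ℝ) (f : ℝ → ℝ), Set.InjOn f s ∧ ¬ s.Countable ∧
      ∀ A ⊆ s, ¬ A.Countable → ¬ MonotoneOn f A ∧ ¬ AntitoneOn f A := by
  classical
  set T : Set (ℝ → ℝ) := {h | ∃ g : ℝ → ℝ, (Monotone g ∨ Antitone g) ∧ h = Real.tan ∘ g}
    with hTdef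
  have hTne : (Real.tan ∘ id) ∈ T := ⟨id, Or.inl monotone_id, rfl⟩
  haveI : Nonempty ↥T := ⟨⟨_, hTne⟩⟩
  have cardT : #↥T ≤ #ℝ := by rw [mk_real]; exact stmt12_card_family
  obtain ⟨emb⟩ := Cardinal.le_def _ _ |>.1 cardT
  let e : ℝ → (ℝ → ℝ) := fun y => ((Function.invFun emb y : ↥T) : ℝ → ℝ)
  have he : ∀ h ∈ T, ∃ j : ℝ, e j = h := by
    intro h hh
    refine ⟨emb ⟨h, hh⟩, ?_⟩
    simp only [e, Function.leftInverse_invFun emb.injective ⟨h, hh⟩]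
  -- index type of order type ω₁
  obtain ⟨x⟩ : Nonempty ((Cardinal.aleph 1).ord.ToType ≃ ℝ) := by
    refine Cardinal.eq.1 ?_
    rw [Cardinal.mk_toType, Cardinal.card_ord, mk_real]
    have h0 : Cardinal.continuum.{0} = Cardinal.aleph.{0} 1 := by
      apply Cardinal.lift_injective
      rwa [lift_continuum, lift_aleph, Ordinal.lift_one]
    exact h0.symm
  have hIio : ∀ i : (Cardinal.aleph 1).ord.ToType, (Set.Iio i).Countable := fun i =>
    (countable_iff_lt_aleph_one _).2 (Cardinal.mk_Iio_ord_toType i)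
  have hIic : ∀ i : (Cardinal.aleph 1).ord.ToType, (Set.Iic i).Countable := by
    intro i
    rw [← Set.Iio_insert]
    exact (hIio i).insert i
  have hpick : ∀ c : Set ℝ, c.Countable → ∃ y : ℝ, y ∉ c := by
    intro c hc
    by_contra hcon
    push_neg at hcon
    have : c = Set.univ := Set.eq_univ_of_forall hcon
    exact Cardinal.not_countable_real (this ▸ hc)
  have hex : ∀ (i : (Cardinal.aleph 1).ord.ToType) (rec : ∀ j, j < i → ℝ), ∃ y : ℝ,
      y ∉ (Set.range fun j : Set.Iio i => rec j.1 j.2) ∧ ∀ j ≤ i, y ≠ e (x j) (x i) := by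
    intro i rec
    haveI : Countable ↥(Set.Iio i) := (hIio i).to_subtype
    obtain ⟨y, hy⟩ := hpick ((Set.range fun j : Set.Iio i => rec j.1 j.2)
      ∪ ((fun j => e (x j) (x i)) '' Set.Iic i))
      ((Set.countable_range _).union ((hIic i).image _))
    exact ⟨y, fun hmem => hy (Or.inl hmem), fun j hj hje => hy (Or.inr ⟨j, hj, hje.symm⟩)⟩
  choose body hb1 hb2 using hex
  have wf : WellFounded ((· < ·) : (Cardinal.aleph 1).ord.ToType →
      (Cardinal.aleph 1).ord.ToType → Prop) := wellFounded_lt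
  let F : (Cardinal.aleph 1).ord.ToType → ℝ := wf.fix body
  have hF : ∀ i, F i = body i (fun j _ => F j) := fun i => wf.fix_eq body i
  have hFlt : ∀ i j, j < i → F i ≠ F j := by
    intro i j hji hEq
    have h1 := hb1 i (fun j _ => F j)
    rw [← hF i] at h1
    exact h1 ⟨⟨j, hji⟩, hEq.symm⟩
  have hFe : ∀ i j, j ≤ i → F i ≠ e (x j) (x i) := by
    intro i j hj
    have h2 := hb2 i (fun j _ => F j) j hj
    rwa [← hF i] at h2
  -- find a point of an uncountable set above any index
  have habove : ∀ (A : Set ℝ), ¬ A.Countable → ∀ j, ∃ a ∈ A, j < x.symm a := by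
    intro A hAc j
    by_contra hcon
    push_neg at hcon
    refine hAc (((hIic j).image x).mono ?_)
    intro a ha
    exact ⟨x.symm a, hcon a ha, x.apply_symm_apply a⟩
  refine ⟨Set.univ, fun a => F (x.symm a), ?_, Cardinal.not_countable_real, ?_⟩
  · intro a _ b _ hab
    by_contra hne
    rcases lt_trichotomy (x.symm a) (x.symm b) with h | h | h
    · exact hFlt _ _ h hab.symm
    · exact hne (by rw [← x.apply_symm_apply a, ← x.apply_symm_apply b, h])
    · exact hFlt _ _ h hab
  · intro A _ hAc
    constructor
    · intro hmono
      have hm : MonotoneOn (fun a => Real.arctan (F (x.symm a))) A := fun a ha b hb hab =>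
        Real.arctan_strictMono.monotone (hmono ha hb hab)
      have hbdd1 : BddBelow ((fun a => Real.arctan (F (x.symm a))) '' A) :=
        ⟨-(Real.pi / 2), by rintro y ⟨a, -, rfl⟩; exact (Real.neg_pi_div_two_lt_arctan _).le⟩
      have hbdd2 : BddAbove ((fun a => Real.arctan (F (x.symm a))) '' A) :=
        ⟨Real.pi / 2, by rintro y ⟨a, -, rfl⟩; exact (Real.arctan_lt_pi_div_two _).le⟩
      obtain ⟨g, hgmono, hgeq⟩ := hm.exists_monotone_extension hbdd1 hbdd2
      obtain ⟨jr, hj⟩ := he (Real.tan ∘ g) ⟨g, Or.inl hgmono, rfl⟩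
      obtain ⟨a, ha, hlt⟩ := habove A hAc (x.symm jr)
      refine hFe (x.symm a) (x.symm jr) hlt.le ?_
      rw [x.apply_symm_apply, x.apply_symm_apply, hj]
      have := hgeq ha
      simp only [Function.comp_apply, ← this, Real.tan_arctan]
    · intro hanti
      have hm : MonotoneOn (fun a => -Real.arctan (F (x.symm a))) A := fun a ha b hb hab =>
        neg_le_neg (Real.arctan_strictMono.monotone (hanti ha hb hab))
      have hbdd1 : BddBelow ((fun a => -Real.arctan (F (x.symm a))) '' A) :=
        ⟨-(Real.pi / 2), by
          rintro y ⟨a, -, rfl⟩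
          exact neg_le_neg (Real.arctan_lt_pi_div_two _).le⟩
      have hbdd2 : BddAbove ((fun a => -Real.arctan (F (x.symm a))) '' A) :=
        ⟨Real.pi / 2, by
          rintro y ⟨a, -, rfl⟩
          rw [neg_le]
          exact (Real.neg_pi_div_two_lt_arctan _).le⟩
      obtain ⟨g, hgmono, hgeq⟩ := hm.exists_monotone_extension hbdd1 hbdd2
      obtain ⟨jr, hj⟩ := he (Real.tan ∘ fun y => -(g y)) ⟨fun y => -(g y), Or.inr hgmono.neg, rfl⟩
      obtain ⟨a, ha, hlt⟩ := habove A hAc (x.symm jr)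
      refine hFe (x.symm a) (x.symm jr) hlt.le ?_
      rw [x.apply_symm_apply, x.apply_symm_apply, hj]
      have := hgeq ha
      simp only [Function.comp_apply, ← this, neg_neg, Real.tan_arctan]
end

section
/- Assume the Continuum Hypothesis. Then there exists a function $f : \mathbb{R} \to \mathbb{R}$ which is not continuous on any uncountable set: for every uncountable $A \subseteq \mathbb{R}$, the restriction $f \restriction A$ is not continuous. Consequently $f$ is not monotonic on any uncountable set. -/
open Cardinal Filter Set Topology

/-- The "limit value" of the countable partial function coded by `h : ℕ → ℝ × ℝ`
at the point `x`, approaching `x` through the domain (the first coordinates). -/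
noncomputable def s18L (h : ℕ → ℝ × ℝ) (x : ℝ) : ℝ :=
  lim (Filter.map (fun n => (h n).2) (Filter.comap (fun n => (h n).1) (𝓝[≠] x)))

/-- In a second countable space, the set of points of `A` isolated in `A` is countable. -/
lemma s18_isolated_countable (A : Set ℝ) :
    {x | x ∈ A ∧ x ∉ closure (A \ {x})}.Countable := by
  obtain ⟨b, hbc, -, hb⟩ := TopologicalSpace.exists_countable_basis ℝ
  have hsub : {x | x ∈ A ∧ x ∉ closure (A \ {x})} ⊆
      ⋃ u ∈ b, {x | x ∈ u ∩ A ∧ u ∩ A ⊆ {x}} := by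
    rintro x ⟨hxA, hx⟩
    rw [mem_closure_iff] at hx
    push_neg at hx
    obtain ⟨U, hUo, hxU, hU⟩ := hx
    obtain ⟨u, hub, hxu, huU⟩ := hb.exists_subset_of_mem_open hxU hUo
    refine mem_biUnion hub ⟨⟨hxu, hxA⟩, ?_⟩
    rintro y ⟨hyu, hyA⟩
    by_contra hne
    exact (Set.eq_empty_iff_forall_notMem.1 hU) y ⟨huU hyu, hyA, hne⟩
  refine Set.Countable.mono hsub (hbc.biUnion fun u _ => ?_)
  refine Set.Subsingleton.countable fun x hx y hy => ?_
  have := hy.2 hx.1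
  have := hx.2 hy.1
  simp_all

universe u

lemma s18_CH0 (hCH : Cardinal.continuum.{u} = Cardinal.aleph.{u} 1) :
    Cardinal.continuum.{0} = Cardinal.aleph.{0} 1 :=
  Cardinal.lift_eq_aleph_one.mp (by rw [Cardinal.lift_continuum]; exact hCH)

/-- Main construction: under CH there is a real function not continuous on any
uncountable set. -/
lemma s18_main (hCH : Cardinal.continuum.{0} = Cardinal.aleph.{0} 1) :
    ∃ f : ℝ → ℝ, ∀ A : Set ℝ, ¬ A.Countable → ¬ Continuous (A.restrict f) := by
  classical
  set I := (Cardinal.aleph 1).ord.ToType with hIdef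
  -- initial segments of `I` are countable
  have hseg : ∀ i : I, {j : I | j ≤ i}.Countable := by
    intro i
    have h1' : (Set.Iio i).Countable :=
      (Cardinal.countable_iff_lt_aleph_one _).2 (Cardinal.mk_Iio_ord_toType i)
    refine Set.Countable.mono (fun j hj => ?_) (h1'.insert i)
    rcases lt_or_eq_of_le (show j ≤ i from hj) with h | h
    · exact Set.mem_insert_of_mem _ h
    · exact h ▸ Set.mem_insert _ _
  -- bijections with the index type
  have hR : #ℝ = #I := by
    rw [Cardinal.mk_real, hCH]
    exact (Cardinal.mk_ord_toType _).symm
  have hH : #(ℕ → ℝ × ℝ) = #I := by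
    have h3 : #(ℕ → ℝ × ℝ) = Cardinal.continuum := by
      rw [Cardinal.mk_arrow]
      simp [Cardinal.mk_prod, Cardinal.mk_real]
    rw [h3, hCH]
    exact (Cardinal.mk_ord_toType _).symm
  obtain ⟨ι⟩ := Cardinal.eq.1 hR
  obtain ⟨κ⟩ := Cardinal.eq.1 hH
  -- the set of "forbidden" values at `x`
  set bad : ℝ → Set ℝ := fun x => (fun h => s18L h x) '' {h | κ h ≤ ι x} with hbad
  have hbadc : ∀ x, (bad x).Countable := fun x =>
    (Set.Countable.preimage (hseg (ι x)) κ.injective).image _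
  have hne : ∀ x : ℝ, ∃ y, y ∉ bad x := by
    intro x
    by_contra hcon
    push_neg at hcon
    exact Cardinal.not_countable_real
      (Set.Countable.mono (fun y _ => hcon y) (hbadc x))
  choose f hf using hne
  refine ⟨f, fun A hA hc => ?_⟩
  have hcont : ContinuousOn f A := continuousOn_iff_continuous_restrict.2 hc
  -- a countable dense subset of A
  obtain ⟨s, hsc, hsd⟩ := TopologicalSpace.exists_countable_dense ↥A
  set D : Set ℝ := Subtype.val '' s with hDdef
  have hDA : D ⊆ A := by rintro _ ⟨⟨y, hy⟩, -, rfl⟩; exact hy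
  have hDc : D.Countable := hsc.image _
  have hAD : A ⊆ closure D := by
    intro x hx
    have h1 : (⟨x, hx⟩ : ↥A) ∈ closure s := hsd _
    have h2 := image_closure_subset_closure_image
      (f := (Subtype.val : ↥A → ℝ)) continuous_subtype_val
      (Set.mem_image_of_mem _ h1)
    exact h2
  have hAne : A.Nonempty := Set.nonempty_iff_ne_empty.2
    (by rintro rfl; exact hA Set.countable_empty)
  obtain ⟨x0, hx0⟩ := hAne
  have hDne : D.Nonempty := by
    rw [Set.nonempty_iff_ne_empty]
    rintro hemp
    have := hAD hx0
    rw [hemp] at this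
    simp at this
  obtain ⟨e, hDe⟩ := hDc.exists_eq_range hDne
  set h : ℕ → ℝ × ℝ := fun n => (e n, f (e n)) with hhdef
  -- pick a good point x of A
  set Iso : Set ℝ := {x | x ∈ A ∧ x ∉ closure (A \ {x})} with hIso
  set Low : Set ℝ := ι ⁻¹' Set.Iio (κ h) with hLow
  have hLowc : Low.Countable :=
    Set.Countable.preimage
      ((Cardinal.countable_iff_lt_aleph_one _).2 (Cardinal.mk_Iio_ord_toType (κ h)))
      ι.injective
  have hA'ne : (A \ (Iso ∪ Low)).Nonempty := by
    rw [Set.nonempty_iff_ne_empty]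
    intro hemp
    refine hA (Set.Countable.mono (fun y hy => ?_)
      ((s18_isolated_countable A).union hLowc))
    by_contra hn
    exact (Set.eq_empty_iff_forall_notMem.1 hemp) y ⟨hy, hn⟩
  obtain ⟨x, hxA, hxnot⟩ := hA'ne
  have hxIso : x ∈ closure (A \ {x}) := by
    by_contra hcontra
    exact hxnot (Or.inl ⟨hxA, hcontra⟩)
  have hxLow : κ h ≤ ι x := le_of_not_gt fun hlt => hxnot (Or.inr hlt)
  -- x is an accumulation point of D \ {x}
  have hsub2 : A \ {x} ⊆ closure (D \ {x}) := by
    rintro y ⟨hyA, hyx⟩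
    have h1 : y ∈ closure D := hAD hyA
    have h2 : closure D ⊆ closure (D \ {x}) ∪ {x} := by
      have hDsub : D ⊆ (D \ {x}) ∪ {x} := fun z hz => by
        by_cases hzx : z = x
        · exact Or.inr hzx
        · exact Or.inl ⟨hz, hzx⟩
      calc closure D ⊆ closure ((D \ {x}) ∪ {x}) := closure_mono hDsub
        _ = closure (D \ {x}) ∪ {x} := by rw [closure_union, closure_singleton]
    rcases h2 h1 with h3 | h3
    · exact h3
    · exact absurd h3 hyx
  have hxacc : x ∈ closure (D \ {x}) := by
    have := closure_mono hsub2 hxIso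
    rwa [closure_closure] at this
  haveI hNB : (𝓝[D \ {x}] x).NeBot := mem_closure_iff_nhdsWithin_neBot.1 hxacc
  -- the filter used in s18L equals map f (𝓝[D \ {x}] x)
  have hFeq : Filter.map (fun n => (h n).2) (Filter.comap (fun n => (h n).1) (𝓝[≠] x))
      = Filter.map f (𝓝[D \ {x}] x) := by
    have e1 : (fun n => (h n).1) = e := rfl
    have e2 : (fun n => (h n).2) = f ∘ e := rfl
    rw [e1, e2, ← Filter.map_map, Filter.map_comap, ← hDe]
    congr 1
    rw [nhdsWithin, nhdsWithin, inf_assoc, inf_principal]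
    congr 1
    rw [Set.diff_eq, Set.inter_comm]
  have htend : Filter.Tendsto f (𝓝[D \ {x}] x) (𝓝 (f x)) := by
    refine (hcont x hxA).mono_left (nhdsWithin_mono x ?_)
    exact fun y hy => hDA hy.1
  haveI : (Filter.map f (𝓝[D \ {x}] x)).NeBot := Filter.map_neBot
  have hlim : s18L h x = f x := by
    rw [s18L, hFeq]
    exact lim_eq htend
  exact hf x ⟨h, hxLow, hlim⟩

/-- A function monotone on an uncountable set is continuous (as a restriction)
on an uncountable set. -/
lemma s18_mono (f : ℝ → ℝ) (A : Set ℝ) (hA : ¬ A.Countable) (hm : MonotoneOn f A) :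
    ∃ B : Set ℝ, ¬ B.Countable ∧ Continuous (B.restrict f) := by
  have hm' : MonotoneOn (fun y => Real.arctan (f y)) A := fun a ha b hb hab =>
    Real.arctan_strictMono.monotone (hm ha hb hab)
  obtain ⟨g, hg, hfg⟩ := hm'.exists_monotone_extension
    ⟨-(Real.pi / 2), by rintro _ ⟨y, -, rfl⟩; exact (Real.neg_pi_div_two_lt_arctan _).le⟩
    ⟨Real.pi / 2, by rintro _ ⟨y, -, rfl⟩; exact (Real.arctan_lt_pi_div_two _).le⟩
  set C := {x | ¬ ContinuousAt g x} with hC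
  have hCc : C.Countable := hg.countable_not_continuousAt
  refine ⟨A \ C, fun hcnt => hA ?_, ?_⟩
  · refine Set.Countable.mono (fun y hy => ?_) (hcnt.union hCc)
    by_cases hyC : y ∈ C
    · exact Or.inr hyC
    · exact Or.inl ⟨hy, hyC⟩
  · refine continuousOn_iff_continuous_restrict.1 ?_
    intro x hx
    have hgx : ContinuousAt g x := not_not.mp hx.2
    have hcosx : Real.cos (g x) ≠ 0 := by
      rw [← hfg hx.1]
      exact (Real.cos_arctan_pos _).ne'
    have htan : ContinuousAt (fun y => Real.tan (g y)) x :=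
      (Real.continuousAt_tan.2 hcosx).comp hgx
    refine htan.continuousWithinAt.congr (fun y hy => ?_) ?_
    · rw [← hfg hy.1, Real.tan_arctan]
    · rw [← hfg hx.1, Real.tan_arctan]

/-- under CH there is a real function which is not continuous on
any uncountable set, and consequently not monotonic on any uncountable set. -/
theorem stmt_18 (hCH : Cardinal.continuum = Cardinal.aleph 1) :
    ∃ f : ℝ → ℝ,
      (∀ A : Set ℝ, ¬ A.Countable → ¬ Continuous (A.restrict f)) ∧
      (∀ A : Set ℝ, ¬ A.Countable → ¬ MonotoneOn f A ∧ ¬ AntitoneOn f A) := by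
  obtain ⟨f, hf⟩ := s18_main (s18_CH0 hCH)
  refine ⟨f, hf, fun A hA => ⟨fun hm => ?_, fun hm => ?_⟩⟩
  · obtain ⟨B, hB, hBc⟩ := s18_mono f A hA hm
    exact hf B hB hBc
  · have hm' : MonotoneOn (fun y => -(f y)) A := fun a ha b hb hab =>
      neg_le_neg (hm ha hb hab)
    obtain ⟨B, hB, hBc⟩ := s18_mono (fun y => -(f y)) A hA hm'
    apply hf B hB
    have hre : B.restrict f = fun y => -(B.restrict (fun z => -(f z)) y) := by
      funext y; exact (neg_neg _).symm
    rw [hre]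
    exact hBc.neg
end
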